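/- Let F be a Finsler metric of scalar flag curvature κ, with curvature 1-form ξ = (F²/3)d_Jκ + κF d_JF. If d_Jξ = 0, then d_Jκ = 0; consequently κ is a vertical lift κ = f^v of a function f on M and ξ = κF d_JF. -/
import Mathlib


/-- Let F have scalar flag curvature κ with curvature 1-form
ξ = (F²/3)d_Jκ + κF d_JF.  If d_Jξ = 0 then d_Jκ = 0; consequently κ is a vertical
lift κ = f^v of a function f on M, and ξ = κF d_JF.  The hypotheses encode the
Leibniz rules for the vertical derivation d_J, d_J² = 0 on functions, the wedge
being alternating, the homogeneities i_S d_Jκ = C(κ) = 0 and i_S d_JF = C(F) = F,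
the contraction rule for i_S on wedges, the positivity of F (F • regular) and the
vertical-lift characterisation of functions killed by d_J. -/
theorem dJxi_zero_implies_dJkappa_zero
    (Ω0 Ω1 Ω2 : Type) [CommRing Ω0] [Algebra ℝ Ω0]
    [AddCommGroup Ω1] [Module ℝ Ω1] [Module Ω0 Ω1] [IsScalarTower ℝ Ω0 Ω1]
    [AddCommGroup Ω2] [Module ℝ Ω2] [Module Ω0 Ω2]
    (MFun : Type) (vlift : MFun → Ω0)
    (F κ : Ω0) (ξ : Ω1)
    (dJ0 : Ω0 →ₗ[ℝ] Ω1) (dJ1 : Ω1 →ₗ[ℝ] Ω2)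
    (wedge : Ω1 →ₗ[ℝ] Ω1 →ₗ[ℝ] Ω2)
    (iS1 : Ω1 →ₗ[ℝ] Ω0) (iS2 : Ω2 →ₗ[ℝ] Ω1)
    (hξ : ξ = (3⁻¹ : ℝ) • ((F * F) • dJ0 κ) + κ • (F • dJ0 F))
    (hdJξ : dJ1 ξ = 0)
    -- calculus rules
    (hLeibJ : ∀ (g : Ω0) (ω : Ω1), dJ1 (g • ω) = wedge (dJ0 g) ω + g • dJ1 ω)
    (hdJdJ : ∀ g : Ω0, dJ1 (dJ0 g) = 0)
    (halt : ∀ ω : Ω1, wedge ω ω = 0)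
    (hanti : ∀ ω η : Ω1, wedge ω η = -wedge η ω)
    (hLeib0 : ∀ f g : Ω0, dJ0 (f * g) = f • dJ0 g + g • dJ0 f)
    (hiSw : ∀ ω η : Ω1, iS2 (wedge ω η) = iS1 ω • η - iS1 η • ω)
    -- homogeneities: C(κ) = 0, C(F) = F
    (hκ0 : iS1 (dJ0 κ) = 0) (hF1 : iS1 (dJ0 F) = F)
    -- F is nowhere zero
    (hFreg : ∀ ω : Ω1, F • ω = 0 → ω = 0)
    -- functions killed by d_J are vertical lifts
    (hvl : ∀ g : Ω0, dJ0 g = 0 → ∃ f : MFun, g = vlift f) :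
    dJ0 κ = 0 ∧ (∃ f : MFun, κ = vlift f) ∧ ξ = κ • (F • dJ0 F) := by
  -- general Leibniz consequence
  have gen : ∀ (g h : Ω0) (ω : Ω1),
      wedge (dJ0 g) (h • ω) + g • wedge (dJ0 h) ω
        = wedge (g • dJ0 h) ω + wedge (h • dJ0 g) ω := by
    intro g h ω
    have h1 : dJ1 ((g * h) • ω)
        = (wedge (g • dJ0 h) ω + wedge (h • dJ0 g) ω) + (g * h) • dJ1 ω := by
      rw [hLeibJ, hLeib0, map_add]
      simp only [LinearMap.add_apply]
    have h2 : dJ1 ((g * h) • ω)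
        = (wedge (dJ0 g) (h • ω) + g • wedge (dJ0 h) ω) + (g * h) • dJ1 ω := by
      rw [mul_smul, hLeibJ, hLeibJ h, smul_add, smul_smul, add_assoc]
    exact add_right_cancel (h2.symm.trans h1)
  have hdJFdJF : dJ1 (F • dJ0 F) = 0 := by
    rw [hLeibJ, halt, hdJdJ, smul_zero, add_zero]
  -- W := wedge (F • dJ0 F) (dJ0 κ) is zero
  have hW : wedge (F • dJ0 F) (dJ0 κ) = 0 := by
    have hexp : dJ1 ξ = (-(3⁻¹ : ℝ)) • wedge (F • dJ0 F) (dJ0 κ) := by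
      rw [hξ, map_add, map_smul, hLeibJ, hLeibJ, hLeib0, hdJdJ, smul_zero, add_zero,
        hdJFdJF, smul_zero, add_zero, map_add, LinearMap.add_apply,
        hanti (dJ0 κ) (F • dJ0 F)]
      module
    have h3 : (-(3⁻¹ : ℝ)) • wedge (F • dJ0 F) (dJ0 κ) = 0 := hexp ▸ hdJξ
    have := congrArg (fun x => (-(3 : ℝ)) • x) h3
    simpa [smul_smul] using this
  -- V := wedge (F • dJ0 F) (dJ0 F) is zero
  have hV : wedge (F • dJ0 F) (dJ0 F) = 0 := by
    have h4 := gen F F (dJ0 F)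
    rw [halt, smul_zero, add_zero, hanti (dJ0 F) (F • dJ0 F)] at h4
    have h5 : (3 : ℝ) • wedge (F • dJ0 F) (dJ0 F) = 0 := by
      have : wedge (F • dJ0 F) (dJ0 F) + wedge (F • dJ0 F) (dJ0 F)
          + wedge (F • dJ0 F) (dJ0 F) = 0 := by
        rw [← h4]; abel
      rw [show (3 : ℝ) = 1 + 1 + 1 by norm_num, add_smul, add_smul, one_smul]
      exact this
    have := congrArg (fun x => ((3 : ℝ))⁻¹ • x) h5
    simpa [smul_smul] using this
  set a : Ω0 := iS1 (F • dJ0 F) with ha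
  -- contract W = 0
  have hκa : a • dJ0 κ = 0 := by
    have := hiSw (F • dJ0 F) (dJ0 κ)
    rw [hW, map_zero, hκ0, zero_smul, sub_zero] at this
    exact this.symm
  -- contract V = 0
  have hFa' : a • dJ0 F = (F * F) • dJ0 F := by
    have h6 := hiSw (F • dJ0 F) (dJ0 F)
    rw [hV, map_zero, hF1, smul_smul, eq_comm, sub_eq_zero] at h6
    exact h6
  -- key relation: (F*F) • dJκ = q • dJF
  have hU : wedge (κ • dJ0 F) (dJ0 F) + wedge (F • dJ0 κ) (dJ0 F) = 0 := by
    have h7 := gen κ F (dJ0 F)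
    rw [halt, smul_zero, add_zero, hanti (dJ0 κ) (F • dJ0 F), hW, neg_zero] at h7
    exact h7.symm
  set p : Ω0 := iS1 (κ • dJ0 F) with hp
  set b : Ω0 := iS1 (F • dJ0 κ) with hb
  have hkey : (F * F) • dJ0 κ = (p + b - F * κ) • dJ0 F := by
    have h8 := congrArg iS2 hU
    rw [map_zero, map_add, hiSw, hiSw, hF1, ← hp, ← hb, smul_smul, smul_smul] at h8
    linear_combination (norm := module) -h8
  -- (F*F) • ((F*F) • dJκ) = 0
  have hzero : (F * F) • ((F * F) • dJ0 κ) = 0 := by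
    calc (F * F) • ((F * F) • dJ0 κ) = (F * F) • ((p + b - F * κ) • dJ0 F) := by rw [hkey]
      _ = (p + b - F * κ) • ((F * F) • dJ0 F) := by rw [smul_smul, smul_smul, mul_comm]
      _ = (p + b - F * κ) • (a • dJ0 F) := by rw [hFa']
      _ = a • ((p + b - F * κ) • dJ0 F) := by rw [smul_smul, smul_smul, mul_comm]
      _ = a • ((F * F) • dJ0 κ) := by rw [hkey]
      _ = (F * F) • (a • dJ0 κ) := by rw [smul_smul, smul_smul, mul_comm]
      _ = 0 := by rw [hκa, smul_zero]
  have hdκ : dJ0 κ = 0 := by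
    have := hFreg _ (hFreg _ (hFreg _ (hFreg _ (by
      rw [mul_smul, mul_smul] at hzero; exact hzero))))
    exact this
  refine ⟨hdκ, hvl κ hdκ, ?_⟩
  rw [hξ, hdκ, smul_zero, smul_zero, zero_add]
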